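/- arXiv:math/0102045 — 2 statements merged into one kernel-verified Lean document; each statement's English description precedes it below -/
import Mathlib

section
/- Let κ be a regular uncountable cardinal and λ ≥ κ with 2^{<κ} < λ^{<κ} = 2^λ. Then every stationary subset of P_κ(λ) can be partitioned into 2^λ pairwise disjoint stationary sets. -/
/-!
Menas: every club contains the club `closurePoints κ o g` of all `s` closed under some
`g : [λ]^{<ω} → P_κ(λ)`; this rests on chain-closed families being closed under directed unions
of size `< κ`. There are only `2^λ` such `g`. Each `X ∩ closurePoints κ o g` is stationary, hence
cofinal, and a cofinal family of size `μ` gives `λ^{<κ} ≤ μ · 2^{<κ}`; as `2^{<κ} < λ^{<κ}`, it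
has at least `λ^{<κ} = 2^λ` elements. So we may choose distinct `x (A, g) ∈ X ∩ closurePoints κ o g`
for all `A ⊆ λ` and all `g`. Sending `x (A, g)` to `A` and the rest of `X` to `∅`, the fibres
partition `X` into `2^λ` pieces, each meeting every `closurePoints κ o g`, hence every club.
-/

open Cardinal Set

/-- The ordinal corresponding to an element of the canonical type `o.toType` of
order type `o`. -/
noncomputable def ordAt {o : Ordinal} (x : o.ToType) : Ordinal :=
  ((Ordinal.ToType.mk (o := o)).symm x : Set.Iio o).1

/-- `P_κ(λ)`, realized as the collection of subsets of the canonical type of order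
type `o` (for `o = λ.ord`) of cardinality `< κ`. -/
def Pkl (κ : Cardinal) (o : Ordinal) : Set (Set o.ToType) := {s | #s < κ}

/-- Club subsets of `(P_κ(λ), ⊆)`: subfamilies of `P_κ(λ)` closed under unions of
`⊆`-increasing chains of length `< κ` and cofinal in `(P_κ(λ), ⊆)`. -/
def IsClubK (κ : Cardinal) (o : Ordinal) (C : Set (Set o.ToType)) : Prop :=
  C ⊆ Pkl κ o ∧
  (∀ D : Set (Set o.ToType),
      D ⊆ C → D.Nonempty → IsChain (· ⊆ ·) D → #D < κ → ⋃₀ D ∈ C) ∧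
  (∀ s ∈ Pkl κ o, ∃ t ∈ C, s ⊆ t)

/-- Stationary subsets of `P_κ(λ)`: sets meeting every club. -/
def IsStatK (κ : Cardinal) (o : Ordinal) (X : Set (Set o.ToType)) : Prop :=
  ∀ C, IsClubK κ o C → (X ∩ C).Nonempty

open Function

universe u

theorem exists_injective_forall_mem_of_wellFoundedLT {ι β : Type u} [LinearOrder ι]
    [WellFoundedLT ι] (S : ι → Set β) (hS : ∀ i, #(Iio i) < #(S i)) :
    ∃ x : ι → β, Injective x ∧ ∀ i, x i ∈ S i := by
  have fresh : ∀ i (y : Iio i → β), ∃ b ∈ S i, b ∉ range y := fun i y => by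
    by_contra! h
    exact (hS i).not_ge ((mk_le_mk_of_subset h).trans mk_range_le)
  choose pick pick_mem pick_fresh using fresh
  let x : ι → β := WellFoundedLT.fix fun i rec => pick i fun j => rec j.1 j.2
  have hx : ∀ i, x i = pick i fun j => x j.1 := WellFoundedLT.fix_eq _
  refine ⟨x, Injective.of_lt_imp_ne fun i j hij hx_eq => ?_, fun i => hx i ▸ pick_mem _ _⟩
  exact (hx j ▸ pick_fresh j _) ⟨⟨i, hij⟩, hx_eq⟩

theorem exists_injective_forall_mem {ι β : Type u} (S : ι → Set β)
    (hS : ∀ i, #ι ≤ #(S i)) :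
    ∃ x : ι → β, Injective x ∧ ∀ i, x i ∈ S i := by
  obtain ⟨_, _, hι⟩ := Cardinal.exists_ord_eq_type_lt ι
  exact exists_injective_forall_mem_of_wellFoundedLT S fun i =>
    (mk_Iio_lt i hι).trans_le (hS i)

theorem power_le_mk_setOf_mk_le {α : Type u} {c : Cardinal.{u}} (hα : ℵ₀ ≤ #α)
    (hc : c ≤ #α) :
    #α ^ c ≤ #{s : Set α | #s ≤ c} := by
  obtain ⟨E⟩ : Nonempty (c.out × α ↪ α) := by
    rw [← Cardinal.le_def, mk_prod, lift_id, lift_id, mk_out]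
    exact mul_le_of_le hα hc le_rfl
  let code : (c.out → α) → {s : Set α | #s ≤ c} := fun f =>
    ⟨E '' univ.graphOn f, mk_image_le.trans <| mk_image_le.trans <| by rw [mk_univ, mk_out]⟩
  have hcode : Injective code := fun f g h =>
    graphOn_univ_injective (image_injective.2 E.injective (congrArg Subtype.val h))
  calc #α ^ c = #(c.out → α) := by rw [← power_def, mk_out]
    _ ≤ _ := mk_le_of_injective hcode

theorem powerlt_le_mk_setOf_mk_lt {α : Type u} {κ : Cardinal.{u}} (hα : ℵ₀ ≤ #α)
    (hκ : κ ≤ #α) : #α ^< κ ≤ #{s : Set α | #s < κ} :=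
  powerlt_le.2 fun _ hc => (power_le_mk_setOf_mk_le hα (hc.le.trans hκ)).trans
    (mk_le_mk_of_subset fun _ hs => lt_of_le_of_lt hs hc)

theorem mk_setOf_mk_lt_le_of_cofinal {α : Type u} {κ : Cardinal.{u}} {Y : Set (Set α)}
    (hY : ∀ t ∈ Y, #t < κ) (hcof : ∀ s : Set α, #s < κ → ∃ t ∈ Y, s ⊆ t) :
    #{s : Set α | #s < κ} ≤ #Y * 2 ^< κ := by
  have hcover : {s : Set α | #s < κ} ⊆ ⋃ t ∈ Y, 𝒫 t := fun s hs => by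
    obtain ⟨t, htY, hst⟩ := hcof s hs
    exact mem_biUnion htY hst
  refine (mk_le_mk_of_subset hcover).trans ((mk_biUnion_le _ _).trans (mul_le_mul' le_rfl ?_))
  exact ciSup_le' fun t => (mk_powerset _).trans_le (le_powerlt 2 (hY t t.2))

theorem mk_setOf_finset_subset_lt {α : Type u} {κ : Cardinal.{u}} (hκ : ℵ₀ < κ) {s : Set α}
    (hs : #s < κ) : #{e : Finset α | ↑e ⊆ s} < κ := by
  classical
  have hsub : {e : Finset α | ↑e ⊆ s} ⊆ range (Finset.map (Embedding.subtype (· ∈ s))) :=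
    fun e he => ⟨e.subtype (· ∈ s), Finset.subtype_map_of_mem he⟩
  refine (mk_le_mk_of_subset hsub).trans_lt (mk_range_le.trans_lt ?_)
  rcases finite_or_infinite s with _ | _
  · exact mk_le_aleph0.trans_lt hκ
  · rwa [mk_finset_of_infinite]

theorem mk_iUnion_nat_lt {α : Type u} {κ : Cardinal.{u}} (hreg : κ.IsRegular) (hκ : ℵ₀ < κ)
    {s : ℕ → Set α} (hs : ∀ n, #(s n) < κ) : #(⋃ n, s n) < κ := by
  rw [← sUnion_range, sUnion_eq_biUnion, card_biUnion_lt_iff_forall_of_isRegular hreg]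
  · rintro _ ⟨n, rfl⟩; exact hs n
  · exact (mk_le_aleph0_iff.2 (countable_range s).to_subtype).trans_lt hκ

theorem mk_iUnion_nat_le {α : Type u} {c : Cardinal.{u}} (hc : ℵ₀ ≤ c) {s : ℕ → Set α}
    (hs : ∀ n, #(s n) ≤ c) : #(⋃ n, s n) ≤ c := by
  rw [← sUnion_range]
  refine (mk_sUnion_le _).trans (mul_le_of_le hc ?_ (ciSup_le' ?_))
  · exact (mk_le_aleph0_iff.2 (countable_range s).to_subtype).trans hc
  · rintro ⟨_, n, rfl⟩; exact hs n

theorem mk_set_prod_finset_arrow_set {α : Type u} [Infinite α] :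
    #(Set α × (Finset α → Set α)) = 2 ^ #α := by
  have h2 : ℵ₀ ≤ 2 ^ #α := (aleph0_le_mk α).trans (cantor _).le
  rw [mk_prod, lift_id, lift_id, mk_set, ← power_def, mk_set, mk_finset_of_infinite,
    ← power_mul, mul_eq_self (aleph0_le_mk α), mul_eq_self h2]

theorem fibers_partition {α β : Type u} (F : α → β) (X : Set α)
    (hF : ∀ b, (X ∩ F ⁻¹' {b}).Nonempty) :
    #(range fun b => X ∩ F ⁻¹' {b}) = #β ∧
      (range fun b => X ∩ F ⁻¹' {b}).PairwiseDisjoint id ∧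
      ⋃₀ (range fun b => X ∩ F ⁻¹' {b}) = X := by
  have hdisj : ∀ b b', b ≠ b' → Disjoint (X ∩ F ⁻¹' {b}) (X ∩ F ⁻¹' {b'}) := fun b b' h =>
    ((disjoint_singleton.2 h).preimage F).mono inter_subset_right inter_subset_right
  have hinj : Injective fun b => X ∩ F ⁻¹' {b} := fun b b' h => by
    by_contra hne
    obtain ⟨a, ha⟩ := hF b
    have hb' : a ∈ X ∩ F ⁻¹' {b'} := (show X ∩ F ⁻¹' {b} = X ∩ F ⁻¹' {b'} from h) ▸ ha
    exact (hdisj b b' hne).ne_of_mem ha hb' rfl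
  refine ⟨mk_range_eq _ hinj, ?_, ?_⟩
  · rintro _ ⟨b, rfl⟩ _ ⟨b', rfl⟩ hne
    exact hdisj b b' fun h => hne (h ▸ rfl)
  · ext a; simp

section BinClosure

variable {α : Type u} (f : α → α → α)

def binClosure (A : Set α) : Set α := ⋃ n, (fun T => T ∪ image2 f T T)^[n] A

variable {f}

theorem subset_binClosure (A : Set α) : A ⊆ binClosure f A :=
  subset_iUnion_of_subset 0 subset_rfl

theorem binClosure_mono : Monotone (binClosure f) := fun _ _ h =>
  iUnion_mono fun n =>
    Monotone.iterate (fun _ _ h => union_subset_union h (image2_subset h h)) n h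

theorem apply_mem_binClosure {A : Set α} {a b : α} (ha : a ∈ binClosure f A)
    (hb : b ∈ binClosure f A) : f a b ∈ binClosure f A := by
  have hmono : Monotone fun n => (fun T => T ∪ image2 f T T)^[n] A :=
    monotone_nat_of_le_succ fun n => by
      simp only [iterate_succ_apply']; exact subset_union_left
  obtain ⟨m, ham⟩ := mem_iUnion.1 ha
  obtain ⟨n, hbn⟩ := mem_iUnion.1 hb
  refine mem_iUnion.2 ⟨max m n + 1, ?_⟩
  rw [iterate_succ_apply']
  exact Or.inr (mem_image2_of_mem (hmono (le_max_left m n) ham)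
    (hmono (le_max_right m n) hbn))

theorem mk_binClosure_le (A : Set α) : #(binClosure f A) ≤ max #A ℵ₀ := by
  refine mk_iUnion_nat_le (le_max_right _ _) fun n => ?_
  induction n with
  | zero => exact le_max_left _ _
  | succ n ih =>
    rw [iterate_succ_apply']
    exact (mk_union_le _ _).trans (add_le_of_le (le_max_right _ _) ih
      (mk_image2_le.trans (mul_le_of_le (le_max_right _ _) ih ih)))

end BinClosure

section DirectedClosure

variable {β : Type u} [CompleteLattice β]

def ChainSupClosed (κ : Cardinal.{u}) (C : Set β) : Prop :=
  ∀ D ⊆ C, D.Nonempty → IsChain (· ≤ ·) D → #D < κ → sSup D ∈ C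

variable {κ : Cardinal.{u}} {C : Set β}

theorem sSup_mem_of_directedOn_of_countable (hκ : ℵ₀ < κ) (hC : ChainSupClosed κ C)
    {D : Set β} (hDC : D ⊆ C) (hne : D.Nonempty) (hdir : DirectedOn (· ≤ ·) D)
    (hD : D.Countable) : sSup D ∈ C := by
  have : Encodable D := @Encodable.ofCountable _ hD.to_subtype
  have : Inhabited D := ⟨⟨hne.some, hne.some_mem⟩⟩
  have hd := hdir.directed_val
  have hsup : sSup (range (Subtype.val ∘ hd.sequence Subtype.val)) = sSup D :=
    le_antisymm (sSup_le_sSup (range_subset_iff.2 fun n => (hd.sequence _ n).2))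
      (sSup_le fun d hdD => (hd.le_sequence ⟨d, hdD⟩).trans (le_sSup ⟨_, rfl⟩))
  rw [← hsup]
  exact hC _ (range_subset_iff.2 fun n => hDC (hd.sequence _ n).2) (range_nonempty _)
    hd.sequence_mono.isChain_range
    ((mk_le_aleph0_iff.2 (countable_range _).to_subtype).trans_lt hκ)

theorem sSup_mem_of_directedOn_of_forall_lt (hC : ChainSupClosed κ C) {D : Set β}
    (hdir : DirectedOn (· ≤ ·) D) (hD : #D < κ) (hD₀ : ℵ₀ < #D)
    (IH : ∀ D' ⊆ D, D'.Nonempty → DirectedOn (· ≤ ·) D' → #D' < #D → sSup D' ∈ C) :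
    sSup D ∈ C := by
  obtain ⟨e⟩ : Nonempty ((#D).ord.ToType ≃ D) := Cardinal.eq.1 (by simp)
  choose ub hub using hdir.directed_val
  -- `Dj j` closes the first `j` elements of `D` under chosen upper bounds: directed, of size
  -- `< #D`, increasing in `j` and exhausting `D`.
  let Dj : (#D).ord.ToType → Set β := fun j => Subtype.val '' binClosure ub (e '' Iic j)
  have hDj_sub : ∀ j, Dj j ⊆ D := by rintro j _ ⟨d, -, rfl⟩; exact d.2
  have hDj_mono : Monotone Dj := fun i j hij =>
    image_mono (binClosure_mono (image_mono (Iic_subset_Iic.2 hij)))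
  have hDj_mem : ∀ j, e j ∈ binClosure ub (e '' Iic j) :=
    fun j => subset_binClosure _ ⟨j, self_mem_Iic, rfl⟩
  have hDj_lt : ∀ j, #(Dj j) < #D := fun j => by
    have hIic : #(Iic j) < #D := by
      rw [← Iio_insert]
      refine mk_insert_le.trans_lt (add_lt_of_lt hD₀.le ?_ (one_lt_aleph0.trans hD₀))
      simpa using mk_Iio_lt j
    exact mk_image_le.trans_lt <| (mk_binClosure_le _).trans_lt <|
      max_lt (mk_image_le.trans_lt hIic) hD₀
  have hDj_dir : ∀ j, DirectedOn (· ≤ ·) (Dj j) := by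
    rintro j _ ⟨a, ha, rfl⟩ _ ⟨b, hb, rfl⟩
    exact ⟨ub a b, ⟨ub a b, apply_mem_binClosure ha hb, rfl⟩, hub a b⟩
  have hsup : sSup (range fun j => sSup (Dj j)) = sSup D := by
    refine le_antisymm (sSup_le ?_) (sSup_le fun d hd => ?_)
    · rintro _ ⟨j, rfl⟩; exact sSup_le_sSup (hDj_sub j)
    · have hmem : d ∈ Dj (e.symm ⟨d, hd⟩) := ⟨_, hDj_mem _, by simp⟩
      exact (le_sSup hmem).trans (le_sSup ⟨_, rfl⟩)
  have : Nonempty (#D).ord.ToType := by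
    rw [← mk_ne_zero_iff, mk_ord_toType]; exact (aleph0_pos.trans hD₀).ne'
  rw [← hsup]
  refine hC _ ?_ (range_nonempty _)
    (Monotone.isChain_range fun i j hij => sSup_le_sSup (hDj_mono hij))
    (mk_range_le.trans_lt (by simpa using hD))
  rintro _ ⟨j, rfl⟩
  exact IH _ (hDj_sub j) ⟨_, _, hDj_mem j, rfl⟩ (hDj_dir j) (hDj_lt j)

theorem sSup_mem_of_directedOn (hκ : ℵ₀ < κ) (hC : ChainSupClosed κ C)
    {D : Set β} (hDC : D ⊆ C) (hne : D.Nonempty) (hdir : DirectedOn (· ≤ ·) D)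
    (hD : #D < κ) : sSup D ∈ C := by
  induction hμ : #D using WellFoundedLT.induction generalizing D with
  | _ μ IH =>
  rcases le_or_gt #D ℵ₀ with hD₀ | hD₀
  · exact sSup_mem_of_directedOn_of_countable hκ hC hDC hne hdir (mk_le_aleph0_iff.1 hD₀)
  · refine sSup_mem_of_directedOn_of_forall_lt hC hdir hD hD₀
      fun D' hD' hne' hdir' hlt =>
        IH _ (hμ ▸ hlt) (hD'.trans hDC) hne' hdir' (hlt.trans hD) rfl

end DirectedClosure

section Club

variable {κ : Cardinal.{u}} {o : Ordinal.{u}}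

def closurePoints (κ : Cardinal.{u}) (o : Ordinal.{u})
    (g : Finset o.ToType → Set o.ToType) : Set (Set o.ToType) :=
  {s | s ∈ Pkl κ o ∧ ∀ e : Finset o.ToType, ↑e ⊆ s → g e ⊆ s}

theorem sUnion_mem_closurePoints (hreg : κ.IsRegular) {g : Finset o.ToType → Set o.ToType}
    {D : Set (Set o.ToType)} (hD : D ⊆ closurePoints κ o g) (hne : D.Nonempty)
    (hch : IsChain (· ⊆ ·) D) (hDκ : #D < κ) : ⋃₀ D ∈ closurePoints κ o g := by
  refine ⟨?_, fun e he => ?_⟩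
  · rw [sUnion_eq_iUnion]
    exact (card_iUnion_lt_iff_forall_of_isRegular hreg hDκ).2 fun d => (hD d.2).1
  · have := hne.to_subtype
    rw [sUnion_eq_iUnion] at he
    obtain ⟨d, hd⟩ := hch.directedOn.directed_val.exists_mem_subset_of_finset_subset_biUnion he
    exact ((hD d.2).2 e hd).trans (subset_sUnion_of_mem d.2)

theorem exists_closurePoints_superset (hreg : κ.IsRegular) (hκ : ℵ₀ < κ)
    {g : Finset o.ToType → Set o.ToType} (hg : ∀ e, #(g e) < κ) {s : Set o.ToType}
    (hs : #s < κ) : ∃ t ∈ closurePoints κ o g, s ⊆ t := by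
  let step : Set o.ToType → Set o.ToType :=
    fun t => t ∪ ⋃ e ∈ {e : Finset o.ToType | ↑e ⊆ t}, g e
  have hstep_lt : ∀ n, #(step^[n] s) < κ := by
    intro n
    induction n with
    | zero => exact hs
    | succ n ih =>
      rw [iterate_succ_apply']
      refine (mk_union_le _ _).trans_lt (add_lt_of_lt hreg.aleph0_le ih ?_)
      exact (card_biUnion_lt_iff_forall_of_isRegular hreg
        (mk_setOf_finset_subset_lt hκ ih)).2 fun e _ => hg e
  have hmono : Monotone fun n => step^[n] s := monotone_nat_of_le_succ fun n => by
    simp only [iterate_succ_apply']; exact subset_union_left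
  refine ⟨⋃ n, step^[n] s, ⟨mk_iUnion_nat_lt hreg hκ hstep_lt, fun e he => ?_⟩,
    subset_iUnion_of_subset 0 subset_rfl⟩
  obtain ⟨n, hn⟩ := hmono.directed_le.exists_mem_subset_of_finset_subset_biUnion he
  refine subset_iUnion_of_subset (n + 1) ?_
  rw [iterate_succ_apply']
  exact subset_union_of_subset_right (subset_biUnion_of_mem (u := g) hn) _

theorem isClubK_closurePoints (hreg : κ.IsRegular) (hκ : ℵ₀ < κ)
    {g : Finset o.ToType → Set o.ToType} (hg : ∀ e, #(g e) < κ) :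
    IsClubK κ o (closurePoints κ o g) :=
  ⟨fun _ hs => hs.1, fun _ => sUnion_mem_closurePoints hreg,
    fun _ hs => exists_closurePoints_superset hreg hκ hg hs⟩

theorem exists_monotone_mem_of_isClubK (hreg : κ.IsRegular) (hκ : ℵ₀ < κ)
    {C : Set (Set o.ToType)} (hC : IsClubK κ o C) :
    ∃ g : Finset o.ToType → Set o.ToType, Monotone g ∧ ∀ e, ↑e ⊆ g e ∧ g e ∈ C := by
  have next : ∀ (e : Finset o.ToType) (r : ∀ e' ⊂ e, C),
      ∃ t ∈ C, ↑e ∪ ⋃ (e' : Finset o.ToType) (h : e' ⊂ e), (r e' h : Set o.ToType) ⊆ t := by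
    intro e r
    refine hC.2.2 _ ((mk_union_le _ _).trans_lt (add_lt_of_lt hreg.aleph0_le
      (e.finite_toSet.lt_aleph0.trans hκ) ?_))
    have hfin : {e' : Finset o.ToType | e' ⊂ e}.Finite :=
      e.powerset.finite_toSet.subset fun e' h => Finset.mem_powerset.2 h.subset
    exact (card_biUnion_lt_iff_forall_of_isRegular (s := {e' | e' ⊂ e}) hreg
      (hfin.lt_aleph0.trans hκ)).2 fun e' h => hC.1 (r e' h).2
  choose next next_mem next_sup using next
  let g : Finset o.ToType → C := Finset.strongInduction fun e r => ⟨next e r, next_mem e r⟩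
  have hg : ∀ e, (g e : Set o.ToType) = next e fun e' _ => g e' := fun e => by
    rw [show g e = _ from Finset.strongInduction_eq _ e]
  refine ⟨fun e => g e, fun e e' hle => ?_, fun e => ⟨?_, (g e).2⟩⟩
  · rcases hle.lt_or_eq with hlt | rfl
    · show (g e : Set o.ToType) ⊆ g e'
      rw [hg e']
      exact (subset_iUnion₂_of_subset e hlt subset_rfl).trans
        (subset_union_right.trans (next_sup e' fun e'' _ => g e''))
    · exact subset_rfl
  · show ↑e ⊆ (g e : Set o.ToType)
    rw [hg e]
    exact subset_union_left.trans (next_sup _ _)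

theorem exists_closurePoints_subset (hreg : κ.IsRegular) (hκ : ℵ₀ < κ)
    {C : Set (Set o.ToType)} (hC : IsClubK κ o C) :
    ∃ g : Finset o.ToType → Set o.ToType, (∀ e, #(g e) < κ) ∧ closurePoints κ o g ⊆ C := by
  obtain ⟨g, hmono, hg⟩ := exists_monotone_mem_of_isClubK hreg hκ hC
  refine ⟨g, fun e => hC.1 (hg e).2, fun s ⟨hs, hcl⟩ => ?_⟩
  have hD : ⋃₀ (g '' {e | ↑e ⊆ s}) = s := by
    refine (sUnion_subset ?_).antisymm fun x hx => ?_
    · rintro _ ⟨e, he, rfl⟩; exact hcl e he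
    · exact ⟨g {x}, ⟨{x}, by simpa using hx, rfl⟩, (hg {x}).1 (by simp)⟩
  rw [← hD]
  refine sSup_mem_of_directedOn hκ hC.2.1 ?_ ⟨g ∅, ∅, by simp, rfl⟩ ?_
    (mk_image_le.trans_lt (mk_setOf_finset_subset_lt hκ hs))
  · rintro _ ⟨e, -, rfl⟩; exact (hg e).2
  · rintro _ ⟨e₁, he₁, rfl⟩ _ ⟨e₂, he₂, rfl⟩
    refine ⟨g (e₁ ∪ e₂), ⟨e₁ ∪ e₂, ?_, rfl⟩, hmono Finset.subset_union_left,
      hmono Finset.subset_union_right⟩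
    simpa using union_subset he₁ he₂

theorem IsStatK.inter_closurePoints (hreg : κ.IsRegular) (hκ : ℵ₀ < κ)
    {X : Set (Set o.ToType)} (hX : IsStatK κ o X) {g : Finset o.ToType → Set o.ToType}
    (hg : ∀ e, #(g e) < κ) : IsStatK κ o (X ∩ closurePoints κ o g) := by
  intro C hC
  obtain ⟨g', hg', hg'C⟩ := exists_closurePoints_subset hreg hκ hC
  obtain ⟨t, htX, ht, hcl⟩ := hX _ (isClubK_closurePoints hreg hκ (g := fun e => g e ∪ g' e)
    fun e => (mk_union_le _ _).trans_lt (add_lt_of_lt hreg.aleph0_le (hg e) (hg' e)))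
  exact ⟨t, ⟨htX, ht, fun e he => subset_union_left.trans (hcl e he)⟩,
    hg'C ⟨ht, fun e he => subset_union_right.trans (hcl e he)⟩⟩

theorem IsStatK.exists_superset (hreg : κ.IsRegular) (hκ : ℵ₀ < κ) {X : Set (Set o.ToType)}
    (hX : IsStatK κ o X) {s : Set o.ToType} (hs : #s < κ) : ∃ t ∈ X, s ⊆ t := by
  obtain ⟨t, htX, -, hst⟩ :=
    hX _ (isClubK_closurePoints hreg hκ (g := fun _ => s) fun _ => hs)
  exact ⟨t, htX, hst ∅ (by simp)⟩

end Club

theorem powerlt_le_mk_of_isStatK {κ lam : Cardinal.{u}} (hreg : κ.IsRegular) (hκ : ℵ₀ < κ)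
    (hkl : κ ≤ lam) (hlt : 2 ^< κ < lam ^< κ) {Y : Set (Set lam.ord.ToType)}
    (hYP : Y ⊆ Pkl κ lam.ord) (hY : IsStatK κ lam.ord Y) : lam ^< κ ≤ #Y := by
  have hlam : #lam.ord.ToType = lam := mk_ord_toType lam
  have hPkl : lam ^< κ ≤ #(Pkl κ lam.ord) := by
    have := powerlt_le_mk_setOf_mk_lt (α := lam.ord.ToType) (κ := κ)
      (by rw [hlam]; exact hκ.le.trans hkl) (by rw [hlam]; exact hkl)
    rwa [hlam] at this
  have hcard : lam ^< κ ≤ #Y * 2 ^< κ := hPkl.trans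
    (mk_setOf_mk_lt_le_of_cofinal hYP fun s hs => hY.exists_superset hreg hκ hs)
  by_contra! hY_lt
  have hinf : ℵ₀ ≤ lam ^< κ := (hκ.le.trans hkl).trans (by
    simpa using le_powerlt lam (one_lt_aleph0.trans hκ))
  exact hcard.not_gt (mul_lt_of_lt hinf hY_lt hlt)

theorem stmt3_general (κ lam : Cardinal) (hreg : κ.IsRegular) (hunc : ℵ₀ < κ)
    (hkl : κ ≤ lam) (h1 : (2 : Cardinal) ^< κ < lam ^< κ) (h2 : lam ^< κ = 2 ^ lam)
    (X : Set (Set lam.ord.ToType)) (hstat : IsStatK κ lam.ord X) :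
    ∃ P : Set (Set (Set lam.ord.ToType)), #P = 2 ^ lam ∧
      (∀ Y ∈ P, IsStatK κ lam.ord Y) ∧ P.PairwiseDisjoint id ∧ ⋃₀ P = X := by
  have hlam : #lam.ord.ToType = lam := mk_ord_toType lam
  have : Infinite lam.ord.ToType := infinite_iff.2 (by rw [hlam]; exact hunc.le.trans hkl)
  let ι := Set lam.ord.ToType ×
    {g : Finset lam.ord.ToType → Set lam.ord.ToType // ∀ e, #(g e) < κ}
  have hι : #ι ≤ 2 ^ lam := calc
    #ι ≤ #(Set lam.ord.ToType × (Finset lam.ord.ToType → Set lam.ord.ToType)) :=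
      mk_le_of_injective (injective_id.prodMap Subtype.val_injective)
    _ = 2 ^ lam := by rw [mk_set_prod_finset_arrow_set, hlam]
  have hlarge : ∀ p : ι, #ι ≤ #↥(X ∩ closurePoints κ lam.ord p.2) := fun p =>
    hι.trans <| h2 ▸ powerlt_le_mk_of_isStatK hreg hunc hkl h1 (fun _ ht => ht.2.1)
      (hstat.inter_closurePoints hreg hunc p.2.2)
  obtain ⟨x, hx_inj, hx⟩ := exists_injective_forall_mem _ hlarge
  let F := extend x Prod.fst fun _ => ∅
  have hxF : ∀ p, x p ∈ X ∩ F ⁻¹' {p.1} := fun p => ⟨(hx p).1, hx_inj.extend_apply _ _ _⟩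
  have hempty : ∀ e : Finset lam.ord.ToType, #(∅ : Set lam.ord.ToType) < κ := fun _ => by
    simpa using aleph0_pos.trans hunc
  obtain ⟨hcard, hdisj, hcover⟩ := fibers_partition F X fun A => ⟨_, hxF (A, ⟨_, hempty⟩)⟩
  refine ⟨_, hcard.trans (by rw [mk_set, hlam]), ?_, hdisj, hcover⟩
  rintro _ ⟨A, rfl⟩ C hC
  obtain ⟨g, hg, hgC⟩ := exists_closurePoints_subset hreg hunc hC
  exact ⟨_, hxF (A, ⟨g, hg⟩), hgC (hx _).2⟩

/-- Let `κ` be regular uncountable and `λ ≥ κ` with `2^{<κ} < λ^{<κ} = 2^λ`.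
Then every stationary subset of `P_κ(λ)` can be partitioned into `2^λ` (that is,
`λ^{<κ}`) pairwise disjoint stationary sets. -/
theorem stmt3 (κ lam : Cardinal) (hreg : κ.IsRegular) (hunc : ℵ₀ < κ)
    (hkl : κ ≤ lam) (h1 : (2 : Cardinal) ^< κ < lam ^< κ) (h2 : lam ^< κ = 2 ^ lam)
    (X : Set (Set lam.ord.ToType)) (hX : X ⊆ Pkl κ lam.ord)
    (hstat : IsStatK κ lam.ord X) :
    ∃ P : Set (Set (Set lam.ord.ToType)), #P = 2 ^ lam ∧
      (∀ Y ∈ P, IsStatK κ lam.ord Y) ∧ P.PairwiseDisjoint id ∧ ⋃₀ P = X :=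
  stmt3_general κ lam hreg hunc hkl h1 h2 X hstat
end

section
/- Let κ be regular uncountable and δ < κ a cardinal with δ⁺ < κ. Then the set {α < κ : cf(α) = ℵ₀} can be partitioned into δ⁺ pairwise disjoint stationary subsets of κ. -/
/-!
Every `a < κ` of cofinality `ω` carries a sequence `s a : ℕ → κ` cofinal in `a`. For some `n`
the sets `{a | β ≤ s a n}` are stationary for all `β < κ`: otherwise each `n` has a bound `β n`
and a club avoiding its set, and a point of the intersection of these countably many clubs lying
above every `β n` would have its sequence bounded below itself. Fodor's lemma, applied to the
regressive map `a ↦ s a n` on each of these sets, gives cofinally many `γ` whose fibre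
`{a | s a n = γ}` is stationary. These disjoint fibres number at least `κ ≥ δ⁺`; take `δ⁺` of them
and add the remaining points to one.
-/

open Cardinal Set Order Function

universe u v

/-- The cofinality of (the ordinal corresponding to) an element of `o.toType`. -/
noncomputable def cofAt {o : Ordinal} (a : o.ToType) : Cardinal := (ordAt a).cof

/-- Club subsets of (the canonical type of order type) `o`: unbounded sets
containing all of their limit points. -/
def OClub {o : Ordinal} (C : Set o.ToType) : Prop :=
  (∀ a, ∃ c ∈ C, a ≤ c) ∧
  ∀ a : o.ToType, (∃ c ∈ C, c < a) → (∀ b < a, ∃ c ∈ C, b < c ∧ c < a) → a ∈ C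

/-- Stationary subsets of (the canonical type of order type) `o`. -/
def OStat {o : Ordinal} (S : Set o.ToType) : Prop :=
  ∀ C, OClub C → (S ∩ C).Nonempty

/-- `c` is a club subset of (the initial segment below) the element `a`. -/
def ClubBelow {o : Ordinal} (c : Set o.ToType) (a : o.ToType) : Prop :=
  c ⊆ Set.Iio a ∧ (∀ b < a, ∃ x ∈ c, b ≤ x) ∧
  ∀ x < a, (∃ y ∈ c, y < x) → (∀ b < x, ∃ y ∈ c, b < y ∧ y < x) → x ∈ c

theorem exists_partition_of_pairwise_disjoint {X ι : Type*} {S : Set X} {A : ι → Set X}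
    (i₀ : ι) (hA : Pairwise (Disjoint on A)) (hAS : ∀ i, A i ⊆ S) :
    ∃ F : ι → Set X, (∀ i, A i ⊆ F i) ∧ Pairwise (Disjoint on F) ∧ ⋃ i, F i = S := by
  classical
  refine ⟨fun i => A i ∪ {x | i = i₀ ∧ x ∈ S \ ⋃ j, A j}, fun i => subset_union_left, ?_, ?_⟩
  · intro i j hij
    have hAij := disjoint_left.1 (hA hij)
    simp only [onFun, disjoint_left, mem_union, mem_ofPred_eq, mem_sdiff, mem_iUnion]
    grind
  · ext x
    simp only [mem_iUnion, mem_union, mem_ofPred_eq, mem_sdiff]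
    grind

section WellOrder

variable {α : Type u} [LinearOrder α]

theorem nonempty_of_aleph0_lt_cof (hα : ℵ₀ < cof α) : Nonempty α :=
  cof_ne_zero_iff.1 (aleph0_pos.trans hα).ne'

theorem noMaxOrder_of_aleph0_lt_cof (hα : ℵ₀ < cof α) : NoMaxOrder α := by
  have := nonempty_of_aleph0_lt_cof hα
  exact (noTopOrder_iff_noMaxOrder α).1 (one_lt_cof_iff.1 (one_lt_aleph0.trans hα))

theorem isClub_Ioi [NoMaxOrder α] (c : α) : IsClub (Ioi c) := by
  refine ⟨fun d hd ⟨y, hy⟩ _ x hx => (hd hy).trans_le (hx.1 hy), fun y => ?_⟩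
  obtain ⟨z, hz⟩ := exists_gt (max c y)
  exact ⟨z, (le_max_left c y).trans_lt hz, (le_max_right c y).trans hz.le⟩

theorem cof_Iio_eq_aleph0_of_isLUB_range {g : ℕ → α} {x : α} (hg : StrictMono g)
    (hx : IsLUB (range g) x) : cof (Iio x) = ℵ₀ := by
  have hgx : ∀ n, g n < x := fun n => (hg n.lt_succ_self).trans_le (hx.1 ⟨n + 1, rfl⟩)
  have hcofinal : ∀ y < x, ∃ n, y < g n := fun y hy => by
    simpa using (lt_isLUB_iff hx).1 hy
  apply le_antisymm
  · let g' : ℕ → Iio x := fun n => ⟨g n, hgx n⟩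
    have : IsCofinal (range g') := fun y => by
      obtain ⟨n, hn⟩ := hcofinal y y.2
      exact ⟨g' n, ⟨n, rfl⟩, hn.le⟩
    exact (cof_le this).trans (by simpa using mk_range_le_lift (f := g'))
  · have : Nonempty (Iio x) := ⟨⟨g 0, hgx 0⟩⟩
    have : NoMaxOrder (Iio x) := ⟨fun y => by
      obtain ⟨n, hn⟩ := hcofinal y y.2
      exact ⟨⟨g n, hgx n⟩, hn⟩⟩
    exact aleph0_le_cof

theorem exists_seq_of_cof_Iio_eq_aleph0 {a : α} (ha : cof (Iio a) = ℵ₀) :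
    ∃ s : ℕ → α, (∀ n, s n < a) ∧ ∀ b < a, ∃ n, b ≤ s n := by
  obtain ⟨t, ht, hct⟩ := exists_cof_eq (Iio a)
  rw [ha] at hct
  have hne : t.Nonempty := nonempty_coe_sort.1 (mk_ne_zero_iff.1 (hct ▸ aleph0_ne_zero))
  obtain ⟨f, rfl⟩ := (le_aleph0_iff_set_countable.1 hct.le).exists_eq_range hne
  refine ⟨fun n => f n, fun n => (f n).2, fun b hb => ?_⟩
  obtain ⟨_, ⟨n, rfl⟩, hbn⟩ := ht ⟨b, hb⟩
  exact ⟨n, hbn⟩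

theorem IsClub.mem_of_isLUB_range {C : Set α} {g : ℕ → α} {x : α} (hC : IsClub C)
    (hg : Monotone g) (hx : IsLUB (range g) x) (m : ℕ) (hgC : ∀ n, m ≤ n → g n ∈ C) :
    x ∈ C := by
  refine hC.isLUB_mem (t := g '' Ici m) (image_subset_iff.2 hgC) (by simp) ⟨?_, ?_⟩
  · exact fun y hy => hx.1 (image_subset_range _ _ hy)
  · intro b hb
    refine hx.2 ?_
    rintro _ ⟨n, rfl⟩
    exact (hg (le_max_left n m)).trans (hb ⟨max n m, le_max_right n m, rfl⟩)

theorem exists_forall_lt_of_aleph0_lt_cof (hα : ℵ₀ < cof α) (f : ℕ → α) :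
    ∃ c, ∀ n, f n < c := by
  have : ¬ IsCofinal (range f) := fun h =>
    (cof_le h).not_gt (hα.trans_le' (by simpa using mk_range_le_lift (f := f)))
  obtain ⟨c, hc⟩ := not_isCofinal_iff.1 this
  exact ⟨c, fun n => hc _ ⟨n, rfl⟩⟩

variable [WellFoundedLT α]

theorem BddAbove.exists_isLUB_of_wellFoundedLT {s : Set α} (hs : BddAbove s) :
    ∃ x, IsLUB s x := by
  obtain ⟨x, hx, hmin⟩ := wellFounded_lt.has_min (upperBounds s) hs
  exact ⟨x, hx, fun b hb => not_lt.1 (hmin b hb)⟩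

theorem exists_strictMono_isLUB_range (hα : ℵ₀ < cof α) (D : α → Set α)
    (hD : ∀ b, ∃ c ∈ D b, b < c) (a : α) :
    ∃ g : ℕ → α, ∃ x, g 0 = a ∧ StrictMono g ∧ (∀ n, g (n + 1) ∈ D (g n)) ∧
      IsLUB (range g) x := by
  choose next hnextD hlt using hD
  have hsucc : ∀ n, next^[n + 1] a = next (next^[n] a) := fun n =>
    iterate_succ_apply' next n a
  obtain ⟨c, hc⟩ := exists_forall_lt_of_aleph0_lt_cof hα fun n => next^[n] a
  have hbdd : BddAbove (range fun n => next^[n] a) :=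
    ⟨c, by rintro _ ⟨n, rfl⟩; exact (hc n).le⟩
  obtain ⟨x, hx⟩ := hbdd.exists_isLUB_of_wellFoundedLT
  refine ⟨fun n => next^[n] a, x, rfl, strictMono_nat_of_lt_succ fun n => ?_,
    fun n => ?_, hx⟩
  · simp only [hsucc]; exact hlt _
  · simp only [hsucc]; exact hnextD _

theorem isStationary_setOf_cof_Iio_eq_aleph0 (hα : ℵ₀ < cof α) :
    IsStationary {a : α | cof (Iio a) = ℵ₀} := by
  intro C hC
  have := nonempty_of_aleph0_lt_cof hα
  have := noMaxOrder_of_aleph0_lt_cof hα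
  have hD : ∀ b, ∃ c ∈ C, b < c := fun b => by
    obtain ⟨b', hb'⟩ := exists_gt b
    obtain ⟨c, hc, hbc⟩ := hC.isCofinal b'
    exact ⟨c, hc, hb'.trans_le hbc⟩
  obtain ⟨g, x, -, hg, hgC, hx⟩ :=
    exists_strictMono_isLUB_range hα (fun _ => C) hD (Classical.arbitrary α)
  refine ⟨x, cof_Iio_eq_aleph0_of_isLUB_range hg hx,
    hC.mem_of_isLUB_range hg.monotone hx 1 fun n hn => ?_⟩
  obtain ⟨k, rfl⟩ := Nat.exists_eq_add_of_le' hn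
  exact hgC k

theorem IsStationary.exists_forall_isStationary_le (hα : ℵ₀ < cof α) {S : Set α}
    (hS : IsStationary S) {s : α → ℕ → α} (hs : ∀ a ∈ S, ∀ b < a, ∃ n, b ≤ s a n) :
    ∃ n, ∀ β, IsStationary {a ∈ S | β ≤ s a n} := by
  by_contra! h
  simp_rw [not_isStationary_iff] at h
  choose β C hC hdisj using h
  have := noMaxOrder_of_aleph0_lt_cof hα
  obtain ⟨c, hc⟩ := exists_forall_lt_of_aleph0_lt_cof hα β
  obtain ⟨x, hxS, hcx, hxC⟩ :=
    hS ((isClub_Ioi c).inter hα.ne' (IsClub.iInter_of_countable hα.ne' hC))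
  obtain ⟨n, hcn⟩ := hs x hxS c hcx
  exact (hdisj n).ne_of_mem ⟨hxS, (hc n).le.trans hcn⟩ (mem_iInter.1 hxC n) rfl

def diagInter (C : α → Set α) : Set α :=
  {a | ∀ γ < a, a ∈ C γ}

variable [IsRegularCardinalOrder α]

theorem mk_Iio_lt_cof (b : α) : #(Iio b) < cof α := by
  have h := Ordinal.typein_lt_type (α := α) (· < ·) b
  rwa [← ord_cof_eq_type_lt, lt_ord, Ordinal.card_typein] at h

theorem isClub_diagInter (hα : ℵ₀ < cof α) {C : α → Set α} (hC : ∀ γ, IsClub (C γ)) :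
    IsClub (diagInter C) := by
  have := noMaxOrder_of_aleph0_lt_cof hα
  refine ⟨fun d hd _ _ x hx γ hγ => ?_, fun a => ?_⟩
  · obtain ⟨c, hcd, hγc⟩ := (lt_isLUB_iff hx).1 hγ
    exact (hC γ).isLUB_mem (t := d ∩ Ici c)
      (fun y hy => hd hy.1 γ (hγc.trans_le hy.2)) ⟨c, hcd, le_rfl⟩ (hx.inter_Ici_of_mem hcd)
  · have hD : ∀ b, ∃ c ∈ ⋂ γ : Iio b, C γ, b < c := fun b => by
      have hclub : IsClub (⋂ γ : Iio b, C γ) :=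
        IsClub.iInter hα.ne' (by simpa using mk_Iio_lt_cof b) fun γ => hC γ
      obtain ⟨b', hb'⟩ := exists_gt b
      obtain ⟨c, hc, hbc⟩ := hclub.isCofinal b'
      exact ⟨c, hc, hb'.trans_le hbc⟩
    obtain ⟨g, x, rfl, hg, hgD, hx⟩ := exists_strictMono_isLUB_range hα _ hD a
    refine ⟨x, fun γ hγ => ?_, hx.1 ⟨0, rfl⟩⟩
    obtain ⟨_, ⟨m, rfl⟩, hγm⟩ := (lt_isLUB_iff hx).1 hγ
    refine (hC γ).mem_of_isLUB_range hg.monotone hx (m + 1) fun n hn => ?_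
    obtain ⟨k, rfl⟩ := Nat.exists_eq_add_of_le hn
    rw [add_right_comm]
    exact mem_iInter.1 (hgD (m + k)) ⟨γ, hγm.trans_le (hg.monotone (m.le_add_right k))⟩

theorem IsStationary.pressing_down (hα : ℵ₀ < cof α) {S : Set α} (hS : IsStationary S)
    {f : α → α} (hf : ∀ a ∈ S, f a < a) : ∃ γ, IsStationary {a ∈ S | f a = γ} := by
  by_contra! h
  simp_rw [not_isStationary_iff] at h
  choose C hC hdisj using h
  obtain ⟨x, hxS, hxC⟩ := hS (isClub_diagInter hα hC)
  exact (hdisj (f x)).ne_of_mem ⟨hxS, rfl⟩ (hxC _ (hf x hxS)) rfl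

theorem isCofinal_setOf_isStationary_fiber (hα : ℵ₀ < cof α) {S : Set α} {f : α → α}
    (hf : ∀ a ∈ S, f a < a) (hunb : ∀ β, IsStationary {a ∈ S | β ≤ f a}) :
    IsCofinal {γ | IsStationary {a ∈ S | f a = γ}} := by
  intro β
  obtain ⟨γ, hγ⟩ := (hunb β).pressing_down hα fun a ha => hf a ha.1
  obtain ⟨a, ⟨-, hβa⟩, rfl⟩ := hγ.nonempty
  exact ⟨f a, hγ.mono fun b hb => ⟨hb.1.1, hb.2⟩, hβa⟩

theorem IsStationary.exists_partition_of_cof_Iio_eq_aleph0 (hα : ℵ₀ < cof α) {S : Set α}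
    (hS : IsStationary S) (hSω : ∀ a ∈ S, cof (Iio a) = ℵ₀) {ι : Type v} [Nonempty ι]
    (hι : lift.{u} #ι ≤ lift.{v} (cof α)) :
    ∃ F : ι → Set α, (∀ i, IsStationary (F i)) ∧ Pairwise (Disjoint on F) ∧ ⋃ i, F i = S := by
  choose! s hs_lt hs_cof using fun a ha => exists_seq_of_cof_Iio_eq_aleph0 (hSω a ha)
  obtain ⟨n, hn⟩ := hS.exists_forall_isStationary_le hα hs_cof
  have hΓ := isCofinal_setOf_isStationary_fiber hα (f := (s · n)) (fun a ha => hs_lt a ha n) hn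
  obtain ⟨e⟩ := lift_mk_le'.1 (hι.trans (lift_le.2 (cof_le hΓ)))
  have hdisj : Pairwise (Disjoint on fun i => {a ∈ S | s a n = e i}) := fun i j hij =>
    disjoint_left.2 fun a hi hj => hij (e.injective (Subtype.ext (hi.2.symm.trans hj.2)))
  obtain ⟨F, hAF, hdisj, hU⟩ :=
    exists_partition_of_pairwise_disjoint (Classical.arbitrary ι) hdisj fun i => sep_subset _ _
  exact ⟨F, fun i => (e i).2.mono (hAF i), hdisj, hU⟩

end WellOrder

theorem cofAt_eq_cof_Iio {o : Ordinal} (a : o.ToType) : cofAt a = cof (Iio a) :=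
  (Order.cof_Iio a).symm

theorem OClub.isClub {o : Ordinal} {C : Set o.ToType} (hC : OClub C) : IsClub C := by
  refine ⟨fun d hd ⟨c, hc⟩ _ x hx => ?_, hC.1⟩
  by_cases hxd : x ∈ d
  · exact hd hxd
  have hlt : ∀ y ∈ d, y < x := fun y hy => (hx.1 hy).lt_of_ne fun h => hxd (h ▸ hy)
  refine hC.2 x ⟨c, hd hc, hlt c hc⟩ fun b hb => ?_
  obtain ⟨y, hy, hby⟩ := (lt_isLUB_iff hx).1 hb
  exact ⟨y, hd hy, hby, hlt y hy⟩

theorem IsStationary.oStat {o : Ordinal} {S : Set o.ToType} (hS : IsStationary S) : OStat S :=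
  fun _ hC => hS hC.isClub

theorem stmt18_general (κ δ : Cardinal) (hreg : κ.IsRegular) (hunc : ℵ₀ < κ)
    (hδ : Order.succ δ < κ) :
    ∃ F : (Order.succ δ).ord.ToType → Set κ.ord.ToType,
      (∀ i, OStat (F i) ∧ F i ⊆ {a | cofAt a = ℵ₀}) ∧
      Pairwise (Function.onFun Disjoint F) ∧
      (⋃ i, F i) = {a : κ.ord.ToType | cofAt a = ℵ₀} := by
  have hcof : cof κ.ord.ToType = κ := by rw [Ordinal.cof_toType, hreg.cof_ord]
  have : IsRegularCardinalOrder κ.ord.ToType := ⟨by rw [Ordinal.type_toType, hcof]⟩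
  have : Nonempty (Order.succ δ).ord.ToType := by
    rw [Ordinal.nonempty_toType_iff, ne_eq, ord_eq_zero]
    exact (Order.lt_succ δ).ne_bot
  have hι : lift #(Order.succ δ).ord.ToType ≤ lift (cof κ.ord.ToType) := by
    simpa [hcof] using hδ.le
  simp_rw [cofAt_eq_cof_Iio]
  have hα : ℵ₀ < cof κ.ord.ToType := hcof.symm ▸ hunc
  obtain ⟨F, hF, hdisj, hU⟩ :=
    (isStationary_setOf_cof_Iio_eq_aleph0 hα).exists_partition_of_cof_Iio_eq_aleph0 hα
      (fun _ ha => ha) hι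
  exact ⟨F, fun i => ⟨(hF i).oStat, hU ▸ subset_iUnion F i⟩, hdisj, hU⟩

/-- (Solovay splitting.) Let `κ` be regular uncountable and `δ < κ` a cardinal with
`δ⁺ < κ`. Then `{α < κ : cf(α) = ℵ₀}` can be partitioned into `δ⁺` pairwise disjoint
stationary subsets of `κ`. -/
theorem stmt18 (κ δ : Cardinal) (hreg : κ.IsRegular) (hunc : ℵ₀ < κ)
    (hδκ : δ < κ) (hδ : Order.succ δ < κ) :
    ∃ F : (Order.succ δ).ord.ToType → Set κ.ord.ToType,
      (∀ i, OStat (F i) ∧ F i ⊆ {a | cofAt a = ℵ₀}) ∧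
      Pairwise (Function.onFun Disjoint F) ∧
      (⋃ i, F i) = {a : κ.ord.ToType | cofAt a = ℵ₀} :=
  stmt18_general κ δ hreg hunc hδ
end
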